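/- arXiv:1506.04299 — 10 statements merged into one kernel-verified Lean document; each statement's English description precedes it below -/
import Mathlib

section
/- Let D be a finite database instance partitioned into disjoint sets D = Dⁿ ∪ Dˣ of endogenous and exogenous tuples, and let Q be a boolean monotone query with Q(D) true. Then a tuple t ∈ Dⁿ is an actual cause for the answer of Q in D if and only if t is relevant for the causal abduction problem AP^c = (Q, Dˣ, Dⁿ), i.e., if and only if there exists a subset-minimal set Δ ⊆ Dⁿ such that Q(Dˣ ∪ Δ) holds and t ∈ Δ. -/
/-- Every finite set satisfying `P` contains a subset-minimal subset satisfying `P`. -/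
lemma exists_minimal_subset {α : Type*} [DecidableEq α] (P : Finset α → Prop)
    (A : Finset α) (hA : P A) :
    ∃ Δ ⊆ A, P Δ ∧ ∀ Δ' ⊂ Δ, ¬ P Δ' := by
  induction A using Finset.strongInductionOn with
  | _ A ih =>
    by_cases h : ∃ B ⊂ A, P B
    · obtain ⟨B, hBA, hBP⟩ := h
      obtain ⟨Δ, hΔB, hΔ⟩ := ih B hBA hBP
      exact ⟨Δ, hΔB.trans hBA.subset, hΔ⟩
    · exact ⟨A, subset_rfl, hA, fun Δ' hΔ' hP => h ⟨Δ', hΔ', hP⟩⟩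

/-- For a database instance `D = Dn ∪ Dx` (disjoint endogenous/exogenous
tuples) and a boolean monotone query `Q` true in `D`, a tuple `t ∈ Dn` is an actual
cause for the answer of `Q` iff `t` is relevant for the causal abduction problem
`AP^c = (Q, Dx, Dn)`, i.e., iff `t` belongs to some subset-minimal `Δ ⊆ Dn` with
`Q (Dx ∪ Δ)`. -/
theorem stmt_0 {α : Type*} [DecidableEq α]
    (Dn Dx : Finset α) (hdisj : Disjoint Dn Dx)
    (Q : Finset α → Prop)
    (hmono : ∀ ⦃A B : Finset α⦄, A ⊆ B → Q A → Q B)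
    (D : Finset α) (hD : D = Dn ∪ Dx)
    (hQD : Q D)
    (t : α) (ht : t ∈ Dn) :
    (∃ Γ ⊆ Dn, Q (D \ Γ) ∧ ¬ Q (D \ (Γ ∪ {t}))) ↔
    (∃ Δ ⊆ Dn, t ∈ Δ ∧ Q (Dx ∪ Δ) ∧ ∀ Δ' ⊂ Δ, ¬ Q (Dx ∪ Δ')) := by
  have key : ∀ Γ ⊆ Dn, D \ Γ = Dx ∪ (Dn \ Γ) := by
    intro Γ hΓ
    subst hD
    ext x
    simp only [Finset.mem_sdiff, Finset.mem_union]
    constructor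
    · rintro ⟨hx | hx, hxΓ⟩
      · exact Or.inr ⟨hx, hxΓ⟩
      · exact Or.inl hx
    · rintro (hx | ⟨hx, hxΓ⟩)
      · exact ⟨Or.inr hx, fun hc => Finset.disjoint_left.1 hdisj (hΓ hc) hx⟩
      · exact ⟨Or.inl hx, hxΓ⟩
  constructor
  · rintro ⟨Γ, hΓ, hQ1, hQ2⟩
    set A := Dn \ Γ with hAdef
    have htA : t ∈ A := by
      simp only [hAdef, Finset.mem_sdiff]
      refine ⟨ht, fun hc => hQ2 ?_⟩
      refine hmono ?_ hQ1
      intro x hx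
      simp only [Finset.mem_sdiff, Finset.mem_union, Finset.mem_singleton] at hx ⊢
      exact ⟨hx.1, fun h => h.elim hx.2 (fun h' => hx.2 (h' ▸ hc))⟩
    have hQA : Q (Dx ∪ A) := (key Γ hΓ) ▸ hQ1
    obtain ⟨Δ, hΔA, hQΔ, hmin⟩ := exists_minimal_subset (fun S => Q (Dx ∪ S)) A hQA
    have htΔ : t ∈ Δ := by
      by_contra htΔ
      apply hQ2
      have : D \ (Γ ∪ {t}) = Dx ∪ (Dn \ (Γ ∪ {t})) :=
        key _ (Finset.union_subset hΓ (Finset.singleton_subset_iff.2 ht))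
      rw [this]
      refine hmono ?_ hQΔ
      apply Finset.union_subset_union_right
      intro x hx
      have hxA := hΔA hx
      simp only [hAdef, Finset.mem_sdiff, Finset.mem_union, Finset.mem_singleton] at hxA ⊢
      exact ⟨hxA.1, fun h => h.elim hxA.2 (fun h' => htΔ (h' ▸ hx))⟩
    exact ⟨Δ, hΔA.trans (Finset.sdiff_subset), htΔ, hQΔ, hmin⟩
  · rintro ⟨Δ, hΔ, htΔ, hQΔ, hmin⟩
    refine ⟨Dn \ Δ, Finset.sdiff_subset, ?_, ?_⟩
    · rw [key _ Finset.sdiff_subset, Finset.sdiff_sdiff_eq_self hΔ]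
      exact hQΔ
    · rw [key _ (Finset.union_subset Finset.sdiff_subset (Finset.singleton_subset_iff.2 (hΔ htΔ)))]
      intro hQ'
      apply hmin (Δ \ {t})
      · exact Finset.sdiff_ssubset (Finset.singleton_subset_iff.2 htΔ) (Finset.singleton_nonempty t)
      · refine hmono ?_ hQ'
        apply Finset.union_subset_union_right
        intro x hx
        simp only [Finset.mem_sdiff, Finset.mem_union, Finset.mem_singleton] at hx ⊢
        tauto
end

section
/- Let D be a finite database instance partitioned into disjoint sets D = Dⁿ ∪ Dˣ of endogenous and exogenous tuples, and let Q be a boolean monotone query with Q(D) true. If N is a necessary-hypothesis set of minimum cardinality for the causal abduction problem AP^c = (Q, Dˣ, Dⁿ) and t ∈ N, then the responsibility of t for the answer of Q equals 1/|N|. -/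
/-- If `N` is a necessary-hypothesis set of minimum cardinality for the
causal abduction problem `AP^c = (Q, Dx, Dn)` and `t ∈ N`, then the responsibility of
`t` for the answer of `Q` equals `1/|N|`; i.e., there is a contingency set `Γ ⊆ Dn`
for `t` of minimum cardinality among all contingency sets for `t`, with
`1/(|Γ|+1) = 1/|N|`. -/
theorem stmt_1 {α : Type*} [DecidableEq α]
    (Dn Dx : Finset α) (hdisj : Disjoint Dn Dx)
    (Q : Finset α → Prop)
    (hmono : ∀ ⦃A B : Finset α⦄, A ⊆ B → Q A → Q B)
    (D : Finset α) (hD : D = Dn ∪ Dx)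
    (hQD : Q D)
    (N : Finset α) (hNsub : N ⊆ Dn)
    -- N is a necessary-hypothesis set: no Δ ⊆ Dn \ N satisfies Q (Dx ∪ Δ), and N is
    -- subset-minimal with this property
    (hNnec : ∀ Δ ⊆ Dn \ N, ¬ Q (Dx ∪ Δ))
    (hNmin : ∀ N' ⊂ N, ∃ Δ ⊆ Dn \ N', Q (Dx ∪ Δ))
    -- N has minimum cardinality among all necessary-hypothesis sets
    (hNcard : ∀ M ⊆ Dn, (∀ Δ ⊆ Dn \ M, ¬ Q (Dx ∪ Δ)) →
        (∀ M' ⊂ M, ∃ Δ ⊆ Dn \ M', Q (Dx ∪ Δ)) → N.card ≤ M.card)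
    (t : α) (ht : t ∈ N) :
    ∃ Γ ⊆ Dn, (Q (D \ Γ) ∧ ¬ Q (D \ (Γ ∪ {t}))) ∧
      (∀ Γ' ⊆ Dn, (Q (D \ Γ') ∧ ¬ Q (D \ (Γ' ∪ {t}))) → Γ.card ≤ Γ'.card) ∧
      (1 : ℚ) / (Γ.card + 1) = 1 / N.card := by
  classical
  have htDn : t ∈ Dn := hNsub ht
  have hcardN : 1 ≤ N.card := Finset.card_pos.mpr ⟨t, ht⟩
  refine ⟨N.erase t, (Finset.erase_subset _ _).trans hNsub, ⟨?_, ?_⟩, ?_, ?_⟩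
  · -- Q (D \ N.erase t)
    obtain ⟨Δ, hΔ, hQΔ⟩ := hNmin (N.erase t) (Finset.erase_ssubset ht)
    refine hmono (B := D \ N.erase t) ?_ hQΔ
    apply Finset.union_subset
    · intro x hx
      refine Finset.mem_sdiff.mpr ⟨by simp [hD, hx], fun hxe => ?_⟩
      exact (Finset.disjoint_right.mp hdisj hx) (hNsub (Finset.mem_of_mem_erase hxe))
    · intro x hx
      have := hΔ hx
      rw [Finset.mem_sdiff] at this
      exact Finset.mem_sdiff.mpr ⟨by simp [hD, this.1], this.2⟩
  · -- ¬ Q (D \ (N.erase t ∪ {t}))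
    have hNe : N.erase t ∪ {t} = N := by
      ext x; simp only [Finset.mem_union, Finset.mem_erase, Finset.mem_singleton]
      constructor
      · rintro (⟨_, hx⟩ | rfl) <;> [exact hx; exact ht]
      · intro hx; by_cases hxt : x = t
        · exact Or.inr hxt
        · exact Or.inl ⟨hxt, hx⟩
    rw [hNe]
    intro hQ
    refine hNnec (Dn \ N) le_rfl (hmono ?_ hQ)
    intro x hx
    rw [Finset.mem_sdiff] at hx
    rw [hD] at hx
    rcases Finset.mem_union.mp hx.1 with h | h
    · exact Finset.mem_union_right _ (Finset.mem_sdiff.mpr ⟨h, hx.2⟩)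
    · exact Finset.mem_union_left _ h
  · -- minimality
    intro Γ' hΓ' ⟨hQ', hnQ'⟩
    set T := Γ' ∪ {t} with hT
    have hTDn : T ⊆ Dn := Finset.union_subset hΓ' (Finset.singleton_subset_iff.mpr htDn)
    have hTblock : ∀ Δ ⊆ Dn \ T, ¬ Q (Dx ∪ Δ) := by
      intro Δ hΔ hQΔ
      refine hnQ' (hmono ?_ hQΔ)
      apply Finset.union_subset
      · intro x hx
        refine Finset.mem_sdiff.mpr ⟨by simp [hD, hx], fun hxT => ?_⟩
        exact (Finset.disjoint_right.mp hdisj hx) (hTDn hxT)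
      · intro x hx
        have := hΔ hx
        rw [Finset.mem_sdiff] at this
        exact Finset.mem_sdiff.mpr ⟨by simp [hD, this.1], this.2⟩
    -- pick minimum-cardinality blocking subset of T
    set S := T.powerset.filter (fun M => ∀ Δ ⊆ Dn \ M, ¬ Q (Dx ∪ Δ)) with hS
    have hTS : T ∈ S := Finset.mem_filter.mpr ⟨Finset.mem_powerset.mpr le_rfl, hTblock⟩
    obtain ⟨M, hMS, hMmin⟩ := S.exists_min_image Finset.card ⟨T, hTS⟩
    rw [hS, Finset.mem_filter, Finset.mem_powerset] at hMS
    have hNM : N.card ≤ M.card := by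
      refine hNcard M (hMS.1.trans hTDn) hMS.2 ?_
      intro M' hM'
      by_contra hcon
      push_neg at hcon
      have hM'S : M' ∈ S := Finset.mem_filter.mpr
        ⟨Finset.mem_powerset.mpr (hM'.subset.trans hMS.1), fun Δ h1 => hcon Δ h1⟩
      exact absurd (hMmin M' hM'S) (not_le.mpr (Finset.card_lt_card hM'))
    have hMT : M.card ≤ T.card := Finset.card_le_card hMS.1
    have hTc : T.card ≤ Γ'.card + 1 := by
      calc T.card ≤ Γ'.card + ({t} : Finset α).card := Finset.card_union_le _ _
        _ = Γ'.card + 1 := by simp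
    have : N.card ≤ Γ'.card + 1 := hNM.trans (hMT.trans hTc)
    have : N.card - 1 ≤ Γ'.card := by omega
    simpa [Finset.card_erase_of_mem ht] using this
  · -- arithmetic
    rw [Finset.card_erase_of_mem ht]
    have : ((N.card - 1 : ℕ) : ℚ) + 1 = N.card := by
      have := hcardN; push_cast [Nat.cast_sub this]; ring
    rw [this]
end

section
/- Let f be a monotone predicate on finite sets of tuples (representing entailment of an observation Obs from a Datalog program Π and extensional database E together with a set of abduced atoms), and let Hyp be a finite set of hypotheses. Then a hypothesis h ∈ Hyp is relevant for the abduction problem (i.e., belongs to some subset-minimal Δ ⊆ Hyp with f(Δ)) if and only if h is an actual cause for the observation in the causality setting D = E ∪ Hyp with Dⁿ = Hyp and Dˣ = E, i.e., if and only if there exists Γ ⊆ Hyp such that f(Hyp ∖ Γ) holds and f(Hyp ∖ (Γ ∪ {h})) fails. -/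
private lemma exists_min_subset {α : Type*} [DecidableEq α] {p : Finset α → Prop} :
    ∀ S : Finset α, p S → ∃ T ⊆ S, p T ∧ ∀ T' ⊂ T, ¬ p T' := by
  intro S
  induction S using Finset.strongInductionOn with
  | _ S ih =>
    intro hS
    by_cases hmin : ∀ T' ⊂ S, ¬ p T'
    · exact ⟨S, subset_rfl, hS, hmin⟩
    · push_neg at hmin
      obtain ⟨T', hT'sub, hT'⟩ := hmin
      obtain ⟨T, hTsub, hpT, hTmin⟩ := ih T' hT'sub hT'
      exact ⟨T, hTsub.trans hT'sub.subset, hpT, hTmin⟩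

/-- For a monotone entailment predicate `f` (expressing that
`Π ∪ E ∪ X ⊨ Obs`) and a finite set `Hyp` of hypotheses, a hypothesis `h ∈ Hyp` is
relevant for the abduction problem (belongs to some subset-minimal `Δ ⊆ Hyp` with
`f Δ`) iff `h` is an actual cause for the observation in the causality setting with
`Dⁿ = Hyp`: there is `Γ ⊆ Hyp` with `f (Hyp \ Γ)` and `¬ f (Hyp \ (Γ ∪ {h}))`. -/
theorem stmt_2 {α : Type*} [DecidableEq α]
    (f : Finset α → Prop)
    (hmono : ∀ ⦃X Y : Finset α⦄, X ⊆ Y → f X → f Y)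
    (Hyp : Finset α) (h : α) (hh : h ∈ Hyp) :
    (∃ Δ ⊆ Hyp, f Δ ∧ (∀ Δ' ⊂ Δ, ¬ f Δ') ∧ h ∈ Δ) ↔
    (∃ Γ ⊆ Hyp, f (Hyp \ Γ) ∧ ¬ f (Hyp \ (Γ ∪ {h}))) := by
  constructor
  · rintro ⟨Δ, hΔsub, hfΔ, hΔmin, hhΔ⟩
    refine ⟨Hyp \ Δ, Finset.sdiff_subset, ?_, ?_⟩
    · rwa [Finset.sdiff_sdiff_eq_self hΔsub]
    · have heq : Hyp \ (Hyp \ Δ ∪ {h}) = Δ \ {h} := by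
        ext x
        have := @hΔsub x
        simp only [Finset.mem_sdiff, Finset.mem_union, Finset.mem_singleton]
        tauto
      rw [heq]
      exact hΔmin _ (Finset.sdiff_ssubset (Finset.singleton_subset_iff.mpr hhΔ)
        (Finset.singleton_nonempty h))
  · rintro ⟨Γ, hΓsub, hf1, hf2⟩
    have hbase : f ((Hyp \ (Γ ∪ {h})) ∪ {h}) := by
      refine hmono (fun x hx => ?_) hf1
      simp only [Finset.mem_sdiff, Finset.mem_union, Finset.mem_singleton] at hx ⊢
      by_cases hxh : x = h <;> tauto
    obtain ⟨S, hSsub, hfS, hSmin⟩ :=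
      exists_min_subset (p := fun X => f (X ∪ {h})) _ hbase
    have hhS : h ∉ S := fun hc => by
      have := hSsub hc
      simp at this
    refine ⟨S ∪ {h}, ?_, hfS, ?_, by simp⟩
    · intro x hx
      rcases Finset.mem_union.mp hx with hx | hx
      · exact (Finset.mem_sdiff.mp (hSsub hx)).1
      · rw [Finset.mem_singleton.mp hx]; exact hh
    · intro Δ' hΔ' hfΔ'
      by_cases hhΔ' : h ∈ Δ'
      · have hsub : Δ' \ {h} ⊂ S := by
          constructor
          · intro x hx
            have hx' := Finset.mem_sdiff.mp hx
            rcases Finset.mem_union.mp (hΔ'.subset hx'.1) with hx2 | hx2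
            · exact hx2
            · exact absurd hx2 hx'.2
          · intro hc
            apply hΔ'.2
            intro x hx
            rcases Finset.mem_union.mp hx with hx | hx
            · exact (Finset.mem_sdiff.mp (hc hx)).1
            · rw [Finset.mem_singleton.mp hx]; exact hhΔ'
        apply hSmin _ hsub
        refine hmono (fun x hx => ?_) hfΔ'
        by_cases hxh : x = h
        · exact Finset.mem_union_right _ (Finset.mem_singleton.mpr hxh)
        · exact Finset.mem_union_left _
            (Finset.mem_sdiff.mpr ⟨hx, fun hc => hxh (Finset.mem_singleton.mp hc)⟩)
      · apply hf2
        refine hmono (fun x hx => ?_) hfΔ'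
        have hx1 : x ∈ S := by
          rcases Finset.mem_union.mp (hΔ'.subset hx) with hx2 | hx2
          · exact hx2
          · rw [Finset.mem_singleton.mp hx2] at hx; exact absurd hx hhΔ'
        exact hSsub hx1
end

section
/- Let D be a finite database instance in which all tuples are endogenous, let Q be a monotone query with answer sets (D₁ ⊆ D₂ implies Q(D₁) ⊆ Q(D₂)), and let ā ∈ Q(D). Then a subset D' ⊆ D is a solution to the minimal source-side-effect problem for ā (i.e., ā ∉ Q(D') and D' is subset-maximal among subsets of D with this property) if and only if there exists a tuple t ∈ D ∖ D' such that t is an actual cause for ā and the set Λ := D ∖ (D' ∪ {t}) is a subset-minimal contingency set for t, i.e., ā ∈ Q(D ∖ Λ), ā ∉ Q(D ∖ (Λ ∪ {t})), and for every proper subset Λ' ⊊ Λ, ā ∈ Q(D ∖ (Λ' ∪ {t})). -/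
private lemma key_eq {α : Type*} [DecidableEq α] {D D' : Finset α} {t : α}
    (hD' : D' ⊆ D) (htD : t ∈ D) (htD' : t ∉ D') :
    D \ ((D \ (D' ∪ {t})) ∪ {t}) = D' := by
  ext x
  simp only [Finset.mem_sdiff, Finset.mem_union, Finset.mem_singleton]
  have hx' : x ∈ D' → x ∈ D ∧ x ≠ t := fun h => ⟨hD' h, fun e => htD' (e ▸ h)⟩
  tauto

private lemma key_eq2 {α : Type*} [DecidableEq α] {D D' : Finset α} {t : α}
    (hD' : D' ⊆ D) (htD : t ∈ D) :
    D \ (D \ (D' ∪ {t})) = D' ∪ {t} := by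
  apply Finset.sdiff_sdiff_eq_self
  intro x hx
  rcases Finset.mem_union.mp hx with h | h
  · exact hD' h
  · rwa [Finset.mem_singleton.mp h]

/-- For a database `D` (all tuples endogenous), a monotone query `Q` with
answer sets, and an answer `a ∈ Q D`: a subset `D' ⊆ D` is a solution to the minimal
source-side-effect problem for `a` (i.e., `a ∉ Q D'` and `D'` is subset-maximal among
subsets of `D` with this property) iff there is `t ∈ D \ D'` such that `t` is an actual
cause for `a` and `Λ := D \ (D' ∪ {t})` is a subset-minimal contingency set for `t`. -/
theorem stmt_3 {α β : Type*} [DecidableEq α]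
    (D : Finset α)
    (Q : Finset α → Set β)
    (hmono : ∀ ⦃A B : Finset α⦄, A ⊆ B → Q A ⊆ Q B)
    (a : β) (ha : a ∈ Q D)
    (D' : Finset α) (hD' : D' ⊆ D) :
    (a ∉ Q D' ∧ ∀ D'' ⊆ D, a ∉ Q D'' → ¬ D' ⊂ D'') ↔
    (∃ t ∈ D \ D',
      (∃ Γ ⊆ D, a ∈ Q (D \ Γ) ∧ a ∉ Q (D \ (Γ ∪ {t}))) ∧
      (a ∈ Q (D \ (D \ (D' ∪ {t}))) ∧
       a ∉ Q (D \ ((D \ (D' ∪ {t})) ∪ {t})) ∧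
       ∀ Λ' ⊂ D \ (D' ∪ {t}), a ∈ Q (D \ (Λ' ∪ {t})))) := by
  constructor
  · rintro ⟨hna, hmax⟩
    -- D' ≠ D since a ∈ Q D
    have hne : D' ≠ D := by rintro rfl; exact hna ha
    obtain ⟨t, htD, htD'⟩ := Finset.exists_of_ssubset (hD'.ssubset_of_ne hne)
    refine ⟨t, Finset.mem_sdiff.mpr ⟨htD, htD'⟩, ?_, ?_, ?_, ?_⟩
    · -- actual cause with Γ = D \ (D' ∪ {t})
      refine ⟨D \ (D' ∪ {t}), Finset.sdiff_subset, ?_, ?_⟩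
      · rw [key_eq2 hD' htD]
        have hsub : D' ∪ {t} ⊆ D := by
          intro x hx
          rcases Finset.mem_union.mp hx with h | h
          · exact hD' h
          · rwa [Finset.mem_singleton.mp h]
        have hss : D' ⊂ D' ∪ {t} := by
          refine Finset.ssubset_iff_of_subset Finset.subset_union_left |>.mpr
            ⟨t, Finset.mem_union_right _ (Finset.mem_singleton_self t), htD'⟩
        by_contra h
        exact hmax _ hsub h hss
      · rw [key_eq hD' htD htD']; exact hna
    · -- a ∈ Q (D' ∪ {t})
      rw [key_eq2 hD' htD]
      have hsub : D' ∪ {t} ⊆ D := by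
        intro x hx
        rcases Finset.mem_union.mp hx with h | h
        · exact hD' h
        · rwa [Finset.mem_singleton.mp h]
      have hss : D' ⊂ D' ∪ {t} :=
        Finset.ssubset_iff_of_subset Finset.subset_union_left |>.mpr
          ⟨t, Finset.mem_union_right _ (Finset.mem_singleton_self t), htD'⟩
      by_contra h
      exact hmax _ hsub h hss
    · rw [key_eq hD' htD htD']; exact hna
    · intro Λ' hΛ'
      set D'' := D \ (Λ' ∪ {t}) with hD''def
      have hsub : D'' ⊆ D := Finset.sdiff_subset
      have hΛsub : Λ' ⊆ D \ (D' ∪ {t}) := hΛ'.subset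
      have hD'sub : D' ⊆ D'' := by
        intro x hx
        refine Finset.mem_sdiff.mpr ⟨hD' hx, ?_⟩
        intro hmem
        rcases Finset.mem_union.mp hmem with h | h
        · have := hΛsub h
          simp only [Finset.mem_sdiff, Finset.mem_union] at this
          exact this.2 (Or.inl hx)
        · exact htD' (Finset.mem_singleton.mp h ▸ hx)
      obtain ⟨x, hx1, hx2⟩ := Finset.exists_of_ssubset hΛ'
      simp only [Finset.mem_sdiff, Finset.mem_union, Finset.mem_singleton] at hx1
      push_neg at hx1
      have hxD'' : x ∈ D'' := by
        refine Finset.mem_sdiff.mpr ⟨hx1.1, ?_⟩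
        intro hmem
        rcases Finset.mem_union.mp hmem with h | h
        · exact hx2 h
        · exact hx1.2.2 (Finset.mem_singleton.mp h)
      have hss : D' ⊂ D'' :=
        Finset.ssubset_iff_of_subset hD'sub |>.mpr ⟨x, hxD'', hx1.2.1⟩
      by_contra h
      exact hmax _ hsub h hss
  · rintro ⟨t, ht, _, h1, h2, h3⟩
    rw [Finset.mem_sdiff] at ht
    obtain ⟨htD, htD'⟩ := ht
    rw [key_eq hD' htD htD'] at h2
    rw [key_eq2 hD' htD] at h1
    refine ⟨h2, ?_⟩
    intro D'' hD''sub hna hss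
    by_cases htD'' : t ∈ D''
    · have : D' ∪ {t} ⊆ D'' := by
        intro x hx
        rcases Finset.mem_union.mp hx with h | h
        · exact hss.subset h
        · rwa [Finset.mem_singleton.mp h]
      exact hna (hmono this h1)
    · have hΛ' : D \ (D'' ∪ {t}) ⊂ D \ (D' ∪ {t}) := by
        refine Finset.ssubset_iff_of_subset ?_ |>.mpr ?_
        · apply Finset.sdiff_subset_sdiff (le_refl D)
          exact Finset.union_subset_union_left hss.subset
        · obtain ⟨x, hxD'', hxD'⟩ := Finset.exists_of_ssubset hss
          refine ⟨x, ?_, ?_⟩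
          · refine Finset.mem_sdiff.mpr ⟨hD''sub hxD'', ?_⟩
            intro hmem
            rcases Finset.mem_union.mp hmem with h | h
            · exact hxD' h
            · exact htD'' (Finset.mem_singleton.mp h ▸ hxD'')
          · simp only [Finset.mem_sdiff, Finset.mem_union]
            intro hc
            exact hc.2 (Or.inl hxD'')
      have heq : D \ ((D \ (D'' ∪ {t})) ∪ {t}) = D'' := key_eq hD''sub htD htD''
      have := h3 _ hΛ'
      rw [heq] at this
      exact hna this
end

section
/- Let D be a finite database instance in which all tuples are endogenous, let Q be a monotone query with answer sets, and let ā ∈ Q(D). Then a subset D' ⊆ D is a solution to the minimum source-side-effect problem for ā (i.e., ā ∉ Q(D') and D' has maximum cardinality among subsets of D with this property) if and only if there exists a tuple t ∈ D ∖ D' such that t is a most responsible actual cause for ā, the set Λ := D ∖ (D' ∪ {t}) is a contingency set for t, and there is no contingency set Λ' for t with |Λ'| < |Λ|. -/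
/-- For a database `D` (all tuples endogenous), a monotone query `Q` with
answer sets, and `a ∈ Q D`: a subset `D' ⊆ D` is a solution to the minimum
source-side-effect problem for `a` (`a ∉ Q D'` and `D'` of maximum cardinality among
subsets of `D` with this property) iff there is `t ∈ D \ D'` such that `t` is a most
responsible actual cause for `a`, `Λ := D \ (D' ∪ {t})` is a contingency set for `t`,
and no contingency set for `t` has strictly smaller cardinality. -/
theorem stmt_4 {α β : Type*} [DecidableEq α]
    (D : Finset α)
    (Q : Finset α → Set β)
    (hmono : ∀ ⦃A B : Finset α⦄, A ⊆ B → Q A ⊆ Q B)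
    (a : β) (ha : a ∈ Q D)
    -- contingency sets and causes
    (Cont : α → Finset α → Prop)
    (hCont : ∀ t Γ, Cont t Γ ↔ Γ ⊆ D ∧ a ∈ Q (D \ Γ) ∧ a ∉ Q (D \ (Γ ∪ {t})))
    (Cause : α → Prop)
    (hCause : ∀ t, Cause t ↔ t ∈ D ∧ ∃ Γ, Cont t Γ)
    -- `MostResp t`: `t` is an actual cause and no actual cause has strictly larger
    -- responsibility, i.e. some minimum-cardinality contingency set of `t` is at most
    -- as large as every contingency set of every actual cause
    (MostResp : α → Prop)
    (hMostResp : ∀ t, MostResp t ↔ Cause t ∧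
        ∃ Γ, Cont t Γ ∧ (∀ Γ', Cont t Γ' → Γ.card ≤ Γ'.card) ∧
          ∀ t', Cause t' → ∀ Γ', Cont t' Γ' → Γ.card ≤ Γ'.card)
    (D' : Finset α) (hD' : D' ⊆ D) :
    (a ∉ Q D' ∧ ∀ D'' ⊆ D, a ∉ Q D'' → D''.card ≤ D'.card) ↔
    (∃ t ∈ D \ D', MostResp t ∧ Cont t (D \ (D' ∪ {t})) ∧
      ¬ ∃ Λ', Cont t Λ' ∧ Λ'.card < (D \ (D' ∪ {t})).card) := by

  classical
  -- generic facts about a card-maximal "a-free" subset E of D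
  have key : ∀ E : Finset α, E ⊆ D → a ∉ Q E →
      (∀ F ⊆ D, a ∉ Q F → F.card ≤ E.card) →
      ∀ s ∈ D \ E, Cont s (D \ (E ∪ {s})) ∧
        (D \ (E ∪ {s})).card + E.card + 1 = D.card := by
    intro E hE hnQ hmax s hs
    obtain ⟨hsD, hsE⟩ := Finset.mem_sdiff.mp hs
    have hEs : E ∪ {s} ⊆ D := by
      intro x hx
      rcases Finset.mem_union.mp hx with h | h
      · exact hE h
      · rw [Finset.mem_singleton] at h; exact h ▸ hsD
    have h1 : D \ (D \ (E ∪ {s})) = E ∪ {s} := Finset.sdiff_sdiff_eq_self hEs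
    have h2 : D \ ((D \ (E ∪ {s})) ∪ {s}) = E := by
      ext x
      simp only [Finset.mem_sdiff, Finset.mem_union, Finset.mem_singleton]
      constructor
      · rintro ⟨hxD, h⟩
        by_contra hxE
        exact h (by tauto)
      · intro hxE
        refine ⟨hE hxE, ?_⟩
        rintro (⟨_, h⟩ | rfl)
        · exact h (Or.inl hxE)
        · exact hsE hxE
    have hcardEs : (E ∪ {s}).card = E.card + 1 := by
      rw [Finset.card_union_of_disjoint (Finset.disjoint_singleton_right.mpr hsE)]
      simp
    have hcard : (D \ (E ∪ {s})).card + E.card + 1 = D.card := by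
      have := Finset.card_sdiff_of_subset hEs
      have := Finset.card_le_card hEs
      omega
    refine ⟨(hCont s _).mpr ⟨Finset.sdiff_subset, ?_, ?_⟩, hcard⟩
    · rw [h1]
      by_contra h
      have := hmax _ hEs h
      omega
    · rw [h2]; exact hnQ
  constructor
  · rintro ⟨hnQ, hmax⟩
    -- D ≠ D', so pick t ∈ D \ D'
    have hne : (D \ D').Nonempty := by
      rw [Finset.sdiff_nonempty]
      intro h
      have heq : D' = D := Finset.Subset.antisymm hD' h
      exact hnQ (heq ▸ ha)
    obtain ⟨t, ht⟩ := hne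
    obtain ⟨htD, htD'⟩ := Finset.mem_sdiff.mp ht
    obtain ⟨hContΛ, hcardΛ⟩ := key D' hD' hnQ hmax t ht
    -- minimality: every contingency set of every cause has card ≥ |Λ|
    have hmin : ∀ t', t' ∈ D → ∀ Γ', Cont t' Γ' →
        (D \ (D' ∪ {t})).card ≤ Γ'.card := by
      intro t' ht' Γ' hΓ'
      obtain ⟨hΓ'D, _, hout⟩ := (hCont t' Γ').mp hΓ'
      have hsub : D \ (Γ' ∪ {t'}) ⊆ D := Finset.sdiff_subset
      have hle := hmax _ hsub hout
      have h1 : (D \ (Γ' ∪ {t'})).card = D.card - (Γ' ∪ {t'}).card := by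
        apply Finset.card_sdiff_of_subset
        intro x hx
        rcases Finset.mem_union.mp hx with h | h
        · exact hΓ'D h
        · rw [Finset.mem_singleton] at h; exact h ▸ ht'
      have h2 : (Γ' ∪ {t'}).card ≤ Γ'.card + 1 := by
        have := Finset.card_union_le Γ' ({t'} : Finset α)
        simpa using this
      have h3 : (Γ' ∪ {t'}).card ≤ D.card := Finset.card_le_card (by
        intro x hx
        rcases Finset.mem_union.mp hx with h | h
        · exact hΓ'D h
        · rw [Finset.mem_singleton] at h; exact h ▸ ht')
      omega
    have hCauset : Cause t := (hCause t).mpr ⟨htD, _, hContΛ⟩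
    refine ⟨t, ht, ?_, hContΛ, ?_⟩
    · rw [hMostResp]
      refine ⟨hCauset, _, hContΛ, fun Γ' h => hmin t htD Γ' h, fun t' hc Γ' h => ?_⟩
      exact hmin t' ((hCause t').mp hc).1 Γ' h
    · rintro ⟨Λ', hΛ', hlt⟩
      exact absurd (hmin t htD Λ' hΛ') (by omega)
  · rintro ⟨t, ht, hMR, hContΛ, hnoSmaller⟩
    obtain ⟨htD, htD'⟩ := Finset.mem_sdiff.mp ht
    have hDt : D' ∪ {t} ⊆ D := by
      intro x hx
      rcases Finset.mem_union.mp hx with h | h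
      · exact hD' h
      · rw [Finset.mem_singleton] at h; exact h ▸ htD
    obtain ⟨_, _, hout⟩ := (hCont t _).mp hContΛ
    have hD'eq : D \ ((D \ (D' ∪ {t})) ∪ {t}) = D' := by
      ext x
      simp only [Finset.mem_sdiff, Finset.mem_union, Finset.mem_singleton]
      constructor
      · rintro ⟨hxD, h⟩
        by_contra hxE
        exact h (by tauto)
      · intro hxE
        refine ⟨hD' hxE, ?_⟩
        rintro (⟨_, h⟩ | rfl)
        · exact h (Or.inl hxE)
        · exact htD' hxE
    rw [hD'eq] at hout
    refine ⟨hout, ?_⟩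
    intro D'' hD'' hnQ''
    -- take a card-maximal a-free subset E of D
    obtain ⟨E, hEmem, hEmax⟩ := Finset.exists_max_image
      (D.powerset.filter (fun F => a ∉ Q F)) Finset.card
      ⟨D'', Finset.mem_filter.mpr ⟨Finset.mem_powerset.mpr hD'', hnQ''⟩⟩
    rw [Finset.mem_filter, Finset.mem_powerset] at hEmem
    obtain ⟨hED, hnQE⟩ := hEmem
    have hEmax' : ∀ F ⊆ D, a ∉ Q F → F.card ≤ E.card := by
      intro F hF h
      exact hEmax F (Finset.mem_filter.mpr ⟨Finset.mem_powerset.mpr hF, h⟩)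
    have hne : (D \ E).Nonempty := by
      rw [Finset.sdiff_nonempty]
      intro h
      exact hnQE (hmono (Finset.Subset.antisymm hED h ▸ Finset.Subset.refl D) ha)
    obtain ⟨s, hsDE⟩ := hne
    obtain ⟨hContS, hcardS⟩ := key E hED hnQE hEmax' s hsDE
    have hsD := (Finset.mem_sdiff.mp hsDE).1
    -- s is a cause
    have hCauseS : Cause s := (hCause s).mpr ⟨hsD, _, hContS⟩
    obtain ⟨_, Γ₀, hΓ₀, hminT, hminAll⟩ := (hMostResp t).mp hMR
    have h1 : Γ₀.card ≤ (D \ (E ∪ {s})).card := hminAll s hCauseS _ hContS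
    have h2 : (D \ (D' ∪ {t})).card ≤ Γ₀.card := by
      by_contra h
      exact hnoSmaller ⟨Γ₀, hΓ₀, by omega⟩
    have hcardΛ : (D \ (D' ∪ {t})).card + D'.card + 1 = D.card := by
      have := Finset.card_sdiff_of_subset hDt
      have := Finset.card_le_card hDt
      have : (D' ∪ {t}).card = D'.card + 1 := by
        rw [Finset.card_union_of_disjoint (Finset.disjoint_singleton_right.mpr htD')]
        simp
      omega
    have hDcard := hEmax' D'' hD'' hnQ''
    omega
end

section
/- Let D be a finite database instance in which all tuples are endogenous, let Q be a monotone query with answer sets, and let ā ∈ Q(D). Then there exists a solution to the view side-effect-free problem for ā, i.e., a subset D' ⊆ D with Q(D') = Q(D) ∖ {ā}, if and only if the set of view-conditioned actual causes for ā is non-empty. -/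
/-- For a database `D` (all tuples endogenous), a monotone query `Q` with
answer sets, and `a ∈ Q D`: there is a solution to the view side-effect-free problem
for `a` (some `D' ⊆ D` with `Q D' = Q D \ {a}`) iff the set of view-conditioned actual
causes for `a` is non-empty. -/
theorem stmt_5 {α β : Type*} [DecidableEq α]
    (D : Finset α)
    (Q : Finset α → Set β)
    (hmono : ∀ ⦃A B : Finset α⦄, A ⊆ B → Q A ⊆ Q B)
    (a : β) (ha : a ∈ Q D) :
    (∃ D' ⊆ D, Q D' = Q D \ {a}) ↔
    (∃ t ∈ D, ∃ Γ ⊆ D, t ∉ Γ ∧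
      a ∈ Q (D \ Γ) ∧ a ∉ Q (D \ (Γ ∪ {t})) ∧
      ∀ b ∈ Q D, b ≠ a → b ∈ Q (D \ (Γ ∪ {t}))) := by
  classical
  constructor
  · rintro ⟨D', hD'sub, hD'⟩
    have haD' : a ∉ Q D' := by rw [hD']; simp
    -- minimal S with D' ⊆ S ⊆ D and a ∈ Q S
    set T : Finset (Finset α) := D.powerset.filter (fun S => D' ⊆ S ∧ a ∈ Q S) with hT
    have hDT : D ∈ T := by
      simp [hT, Finset.mem_filter, hD'sub, ha]
    obtain ⟨S, hST, hmin⟩ := T.exists_min_image Finset.card ⟨D, hDT⟩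
    simp only [hT, Finset.mem_filter, Finset.mem_powerset] at hST
    obtain ⟨hSD, hD'S, haS⟩ := hST
    have hne : S ≠ D' := fun h => haD' (h ▸ haS)
    obtain ⟨t, htS, htD'⟩ : ∃ t ∈ S, t ∉ D' := by
      by_contra h
      push_neg at h
      exact hne (Finset.Subset.antisymm h hD'S)
    have hkey : ∀ S' : Finset α, D' ⊆ S' → S' ⊆ D → S'.card < S.card → a ∉ Q S' := by
      intro S' h1 h2 h3 haS'
      have : S ∈ T → S.card ≤ S'.card := fun _ => by
        exact hmin S' (by simp [hT, Finset.mem_filter, Finset.mem_powerset, h1, h2, haS'])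
      have := this (by simp [hT, Finset.mem_filter, Finset.mem_powerset, hSD, hD'S, haS])
      omega
    refine ⟨t, hSD htS, D \ S, Finset.sdiff_subset, fun h => (Finset.mem_sdiff.mp h).2 htS, ?_, ?_, ?_⟩
    · have : D \ (D \ S) = S := by
        rw [Finset.sdiff_sdiff_self_left, Finset.inter_eq_right.mpr hSD]
      rw [this]; exact haS
    · have heq : D \ (D \ S ∪ {t}) = S.erase t := by
        ext x
        simp only [Finset.mem_sdiff, Finset.mem_union, Finset.mem_singleton,
          Finset.mem_erase]
        have hx := @hSD x
        tauto
      rw [heq]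
      exact hkey _ (fun x hx => Finset.mem_erase.mpr ⟨fun h => htD' (h ▸ hx), hD'S hx⟩)
        ((S.erase_subset t).trans hSD) (Finset.card_erase_lt_of_mem htS)
    · intro b hb hba
      have hbD' : b ∈ Q D' := by rw [hD']; exact ⟨hb, hba⟩
      refine hmono (fun x hx => Finset.mem_sdiff.mpr ⟨hSD (hD'S hx), ?_⟩) hbD'
      simp only [Finset.mem_union, Finset.mem_singleton, Finset.mem_sdiff]
      push_neg
      exact ⟨fun _ => hD'S hx, fun h => htD' (h ▸ hx)⟩
  · rintro ⟨t, htD, Γ, hΓ, htΓ, h1, h2, h3⟩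
    refine ⟨D \ (Γ ∪ {t}), Finset.sdiff_subset, Set.Subset.antisymm ?_ ?_⟩
    · intro b hb
      exact ⟨hmono Finset.sdiff_subset hb, fun h => h2 (h ▸ hb)⟩
    · rintro b ⟨hb, hba⟩
      exact h3 b hb hba
end

section
/- Let D be a finite database instance in which all tuples are endogenous, let Q be a monotone query with answer sets, and let ā ∈ Q(D). Then a tuple t ∈ D is an actual cause for ā if and only if there exists a subset D' ⊆ D with t ∈ D ∖ D' such that D' is a solution to the minimal source-side-effect problem for ā, i.e., ā ∉ Q(D') and D' is subset-maximal among subsets of D with ā ∉ Q(D'). -/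
/-!
A minimal source-side-effect solution `D'` avoiding `t` is a maximal subset of `D` losing the
answer; by maximality `D' ∪ {t}` still yields it, so the contingency `Γ = D ∖ (D' ∪ {t})`
exhibits `t` as a cause. Conversely, given a contingency `Γ` for `t`, extend `D ∖ (Γ ∪ {t})`
to a maximal subset of `D` losing the answer; it cannot contain `t`, since then it would contain
`D ∖ Γ`, which by monotonicity yields the answer.
-/

open Finset

namespace Finset

variable {α : Type*}

lemma exists_superset_maximal_subset {p : Finset α → Prop} {D X : Finset α}
    (hXD : X ⊆ D) (hX : p X) : ∃ Y, X ⊆ Y ∧ Maximal (fun Y ↦ Y ⊆ D ∧ p Y) Y :=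
  ((D.powerset : Set (Finset α)).toFinite.subset fun _ hY ↦ mem_powerset.2 hY.1).exists_le_maximal
    ⟨hXD, hX⟩

variable [DecidableEq α]

lemma sdiff_union_singleton (D Γ : Finset α) (t : α) : D \ (Γ ∪ {t}) = (D \ Γ).erase t := by
  rw [union_singleton, sdiff_insert]

lemma sdiff_sdiff_insert_union_singleton {D D' : Finset α} {t : α} (hD' : D' ⊆ D) (ht : t ∈ D)
    (htD' : t ∉ D') : D \ (D \ insert t D' ∪ {t}) = D' := by
  rw [sdiff_union_singleton, sdiff_sdiff_eq_self (insert_subset ht hD'), erase_insert htD']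

end Finset

section ActualCause

variable {α β : Type*} [DecidableEq α] {D D' Γ : Finset α} {Q : Finset α → Set β} {a : β} {t : α}

lemma notMem_of_superset_sdiff_union_singleton (hQ : Monotone Q) (hΓ : a ∈ Q (D \ Γ))
    (hD' : D \ (Γ ∪ {t}) ⊆ D') (haD' : a ∉ Q D') : t ∉ D' := by
  intro htD'
  refine haD' (hQ ?_ hΓ)
  calc D \ Γ ⊆ insert t ((D \ Γ).erase t) := insert_erase_subset t _
    _ ⊆ D' := insert_subset htD' (sdiff_union_singleton D Γ t ▸ hD')

lemma exists_contingency_of_insert (hD' : D' ⊆ D) (ht : t ∈ D \ D') (haD' : a ∉ Q D')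
    (hat : a ∈ Q (insert t D')) : ∃ Γ ⊆ D, a ∈ Q (D \ Γ) ∧ a ∉ Q (D \ (Γ ∪ {t})) := by
  obtain ⟨htD, htD'⟩ := mem_sdiff.1 ht
  refine ⟨D \ insert t D', sdiff_subset, ?_, ?_⟩
  · rwa [Finset.sdiff_sdiff_eq_self (insert_subset htD hD')]
  · rwa [sdiff_sdiff_insert_union_singleton hD' htD htD']

end ActualCause

theorem stmt_6_general {α β : Type*} [DecidableEq α]
    (D : Finset α)
    (Q : Finset α → Set β)
    (hmono : ∀ ⦃A B : Finset α⦄, A ⊆ B → Q A ⊆ Q B)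
    (a : β)
    (t : α) (ht : t ∈ D) :
    (∃ Γ ⊆ D, a ∈ Q (D \ Γ) ∧ a ∉ Q (D \ (Γ ∪ {t}))) ↔
    (∃ D' ⊆ D, t ∈ D \ D' ∧ a ∉ Q D' ∧ ∀ D'' ⊆ D, a ∉ Q D'' → ¬ D' ⊂ D'') := by
  constructor
  · rintro ⟨Γ, -, hΓ, hΓt⟩
    obtain ⟨D', hseed, hmax⟩ := exists_superset_maximal_subset (p := (a ∉ Q ·)) sdiff_subset hΓt
    have htD' := notMem_of_superset_sdiff_union_singleton hmono hΓ hseed hmax.prop.2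
    exact ⟨D', hmax.prop.1, mem_sdiff.2 ⟨ht, htD'⟩, hmax.prop.2,
      fun D'' hD'' haD'' ↦ hmax.not_gt ⟨hD'', haD''⟩⟩
  · rintro ⟨D', hD', htD', haD', hmax⟩
    refine exists_contingency_of_insert hD' htD' haD' (not_not.1 fun hat ↦ ?_)
    exact hmax _ (insert_subset ht hD') hat (ssubset_insert (mem_sdiff.1 htD').2)

/-- For a database `D` (all tuples endogenous), a monotone query `Q` with
answer sets, and `a ∈ Q D`: a tuple `t ∈ D` is an actual cause for `a` iff there is a
subset `D' ⊆ D` with `t ∈ D \ D'` such that `D'` is a solution to the minimal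
source-side-effect problem for `a` (`a ∉ Q D'`, with `D'` subset-maximal among subsets
of `D` having this property). -/
theorem stmt_6 {α β : Type*} [DecidableEq α]
    (D : Finset α)
    (Q : Finset α → Set β)
    (hmono : ∀ ⦃A B : Finset α⦄, A ⊆ B → Q A ⊆ Q B)
    (a : β) (ha : a ∈ Q D)
    (t : α) (ht : t ∈ D) :
    (∃ Γ ⊆ D, a ∈ Q (D \ Γ) ∧ a ∉ Q (D \ (Γ ∪ {t}))) ↔
    (∃ D' ⊆ D, t ∈ D \ D' ∧ a ∉ Q D' ∧ ∀ D'' ⊆ D, a ∉ Q D'' → ¬ D' ⊂ D'') :=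
  stmt_6_general D Q hmono a t ht
end

section
/- Let D be a finite database instance in which all tuples are endogenous, let Q be a monotone query with answer sets, and let ā ∈ Q(D). Then a tuple t ∈ D is a most responsible actual cause for ā if and only if there exists a subset D' ⊆ D with t ∈ D ∖ D' such that D' is a solution to the minimum source-side-effect problem for ā, i.e., ā ∉ Q(D') and D' has maximum cardinality among subsets of D with ā ∉ Q(D'). -/
/-- For a database `D` (all tuples endogenous), a monotone query `Q` with
answer sets, and `a ∈ Q D`: a tuple `t ∈ D` is a most responsible actual cause for `a`
iff there is a subset `D' ⊆ D` with `t ∈ D \ D'` such that `D'` is a solution to the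
minimum source-side-effect problem for `a` (`a ∉ Q D'`, with `D'` of maximum
cardinality among subsets of `D` having this property). -/
theorem stmt_7 {α β : Type*} [DecidableEq α]
    (D : Finset α)
    (Q : Finset α → Set β)
    (hmono : ∀ ⦃A B : Finset α⦄, A ⊆ B → Q A ⊆ Q B)
    (a : β) (ha : a ∈ Q D)
    -- contingency sets, causes, and most responsible causes
    (Cont : α → Finset α → Prop)
    (hCont : ∀ t' Γ, Cont t' Γ ↔ Γ ⊆ D ∧ a ∈ Q (D \ Γ) ∧ a ∉ Q (D \ (Γ ∪ {t'})))
    (Cause : α → Prop)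
    (hCause : ∀ t', Cause t' ↔ t' ∈ D ∧ ∃ Γ, Cont t' Γ)
    -- `MostResp t'`: `t'` is an actual cause and no actual cause has strictly larger
    -- responsibility, i.e. some minimum-cardinality contingency set of `t'` is at most
    -- as large as every contingency set of every actual cause
    (MostResp : α → Prop)
    (hMostResp : ∀ t', MostResp t' ↔ Cause t' ∧
        ∃ Γ, Cont t' Γ ∧ (∀ Γ', Cont t' Γ' → Γ.card ≤ Γ'.card) ∧
          ∀ t'', Cause t'' → ∀ Γ', Cont t'' Γ' → Γ.card ≤ Γ'.card)
    (t : α) (ht : t ∈ D) :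
    MostResp t ↔
    (∃ D' ⊆ D, t ∈ D \ D' ∧ a ∉ Q D' ∧ ∀ D'' ⊆ D, a ∉ Q D'' → D''.card ≤ D'.card) := by
  classical
  constructor
  · intro hmr
    rw [hMostResp] at hmr
    obtain ⟨hc, Γ, hΓ, _hmin, hglob⟩ := hmr
    rw [hCont] at hΓ
    obtain ⟨hΓD, haQ, hnQ⟩ := hΓ
    have htΓ : t ∉ Γ := by
      intro h
      have hEq : Γ ∪ {t} = Γ := by
        apply Finset.union_eq_left.mpr
        simpa using h
      rw [hEq] at hnQ
      exact hnQ haQ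
    refine ⟨D \ (Γ ∪ {t}), Finset.sdiff_subset, ?_, hnQ, ?_⟩
    · simp [ht]
    · intro D'' hD'' hnD''
      -- take a maximum-cardinality subset M of D with a ∉ Q M
      set S : Finset (Finset α) := D.powerset.filter (fun X => a ∉ Q X) with hS
      have hmemS : ∀ X, X ∈ S ↔ X ⊆ D ∧ a ∉ Q X := by
        intro X; simp [hS]
      have hSne : S.Nonempty :=
        ⟨D \ (Γ ∪ {t}), (hmemS _).mpr ⟨Finset.sdiff_subset, hnQ⟩⟩
      obtain ⟨M, hMS, hMmax⟩ := Finset.exists_max_image S Finset.card hSne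
      obtain ⟨hMD, hMnQ⟩ := (hmemS M).mp hMS
      have hMne : ¬ D ⊆ M := fun h => hMnQ (hmono h ha)
      obtain ⟨t'', ht''⟩ := Finset.not_subset.mp hMne
      obtain ⟨ht''D, ht''M⟩ := ht''
      -- Γ'' := D \ (M ∪ {t''}) is a contingency set for t''
      have hsub : M ∪ {t''} ⊆ D := by
        intro x hx
        rcases Finset.mem_union.mp hx with h | h
        · exact hMD h
        · simpa using Finset.mem_singleton.mp h ▸ ht''D
      have hD1 : D \ (D \ (M ∪ {t''})) = M ∪ {t''} :=
        Finset.sdiff_sdiff_eq_self hsub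
      have hcard1 : (M ∪ {t''}).card = M.card + 1 := by
        rw [Finset.union_comm, ← Finset.insert_eq, Finset.card_insert_of_notMem ht''M]
      have haMu : a ∈ Q (M ∪ {t''}) := by
        by_contra h
        have := hMmax (M ∪ {t''}) ((hmemS _).mpr ⟨hsub, h⟩)
        omega
      have hD2 : D \ (D \ (M ∪ {t''}) ∪ {t''}) = M := by
        ext x
        have hx1 : x ∈ M → x ∈ D := fun h => hMD h
        have hx2 : x = t'' → x ∉ M := fun e => e ▸ ht''M
        simp only [Finset.mem_sdiff, Finset.mem_union, Finset.mem_singleton]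
        tauto
      have hCont'' : Cont t'' (D \ (M ∪ {t''})) := by
        rw [hCont]
        refine ⟨Finset.sdiff_subset, ?_, ?_⟩
        · rw [hD1]; exact haMu
        · rw [hD2]; exact hMnQ
      have hCause'' : Cause t'' := (hCause t'').mpr ⟨ht''D, _, hCont''⟩
      have hle := hglob t'' hCause'' _ hCont''
      -- cardinality bookkeeping
      have hc1 : (D \ (M ∪ {t''})).card = D.card - (M.card + 1) := by
        rw [Finset.card_sdiff_of_subset hsub, hcard1]
      have hsub2 : Γ ∪ {t} ⊆ D := by
        intro x hx
        rcases Finset.mem_union.mp hx with h | h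
        · exact hΓD h
        · simpa using Finset.mem_singleton.mp h ▸ ht
      have hcard2 : (Γ ∪ {t}).card = Γ.card + 1 := by
        rw [Finset.union_comm, ← Finset.insert_eq, Finset.card_insert_of_notMem htΓ]
      have hc2 : (D \ (Γ ∪ {t})).card = D.card - (Γ.card + 1) := by
        rw [Finset.card_sdiff_of_subset hsub2, hcard2]
      have hle1 : (Γ ∪ {t}).card ≤ D.card := Finset.card_le_card hsub2
      have hle2 : (M ∪ {t''}).card ≤ D.card := Finset.card_le_card hsub
      have hD''M : D''.card ≤ M.card :=
        hMmax D'' ((hmemS _).mpr ⟨hD'', hnD''⟩)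
      omega
  · rintro ⟨D', hD'D, htD', hnQD', hmax⟩
    obtain ⟨_, htD'2⟩ := Finset.mem_sdiff.mp htD'
    -- Γ := D \ (D' ∪ {t}) is a minimum-cardinality contingency set for t
    have hsub : D' ∪ {t} ⊆ D := by
      intro x hx
      rcases Finset.mem_union.mp hx with h | h
      · exact hD'D h
      · simpa using Finset.mem_singleton.mp h ▸ ht
    have hD1 : D \ (D \ (D' ∪ {t})) = D' ∪ {t} := Finset.sdiff_sdiff_eq_self hsub
    have hcard1 : (D' ∪ {t}).card = D'.card + 1 := by
      rw [Finset.union_comm, ← Finset.insert_eq, Finset.card_insert_of_notMem htD'2]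
    have haDu : a ∈ Q (D' ∪ {t}) := by
      by_contra h
      have := hmax (D' ∪ {t}) hsub h
      omega
    have hD2 : D \ (D \ (D' ∪ {t}) ∪ {t}) = D' := by
      ext x
      have hx1 : x ∈ D' → x ∈ D := fun h => hD'D h
      have hx2 : x = t → x ∉ D' := fun e => e ▸ htD'2
      simp only [Finset.mem_sdiff, Finset.mem_union, Finset.mem_singleton]
      tauto
    have hContT : Cont t (D \ (D' ∪ {t})) := by
      rw [hCont]
      refine ⟨Finset.sdiff_subset, ?_, ?_⟩
      · rw [hD1]; exact haDu
      · rw [hD2]; exact hnQD'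
    have hCauseT : Cause t := (hCause t).mpr ⟨ht, _, hContT⟩
    -- the generic bound: any contingency set of any cause is at least as large
    have key : ∀ t'', t'' ∈ D → ∀ Γ', Cont t'' Γ' →
        (D \ (D' ∪ {t})).card ≤ Γ'.card := by
      intro t'' ht''D Γ' hΓ'
      rw [hCont] at hΓ'
      obtain ⟨hΓ'D, haQ', hnQ'⟩ := hΓ'
      have ht''Γ' : t'' ∉ Γ' := by
        intro h
        have hEq : Γ' ∪ {t''} = Γ' := by
          apply Finset.union_eq_left.mpr
          simpa using h
        rw [hEq] at hnQ'
        exact hnQ' haQ'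
      have hsub' : Γ' ∪ {t''} ⊆ D := by
        intro x hx
        rcases Finset.mem_union.mp hx with h | h
        · exact hΓ'D h
        · simpa using Finset.mem_singleton.mp h ▸ ht''D
      have hcard' : (Γ' ∪ {t''}).card = Γ'.card + 1 := by
        rw [Finset.union_comm, ← Finset.insert_eq,
          Finset.card_insert_of_notMem ht''Γ']
      have hb := hmax (D \ (Γ' ∪ {t''})) Finset.sdiff_subset hnQ'
      have hc' : (D \ (Γ' ∪ {t''})).card = D.card - (Γ'.card + 1) := by
        rw [Finset.card_sdiff_of_subset hsub', hcard']
      have hcG : (D \ (D' ∪ {t})).card = D.card - (D'.card + 1) := by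
        rw [Finset.card_sdiff_of_subset hsub, hcard1]
      have hle1 : (Γ' ∪ {t''}).card ≤ D.card := Finset.card_le_card hsub'
      have hle2 : (D' ∪ {t}).card ≤ D.card := Finset.card_le_card hsub
      omega
    rw [hMostResp]
    refine ⟨hCauseT, D \ (D' ∪ {t}), hContT, ?_, ?_⟩
    · exact fun Γ' hΓ' => key t ht Γ' hΓ'
    · intro t'' hC'' Γ' hΓ'
      exact key t'' ((hCause t'').mp hC'').1 Γ' hΓ'
end

section
/- Let D be a finite database instance in which all tuples are endogenous, and let Q be a boolean monotone query such that Q(D) holds and Q(∅) fails. Then the set of actual causes for the answer of Q in D is non-empty, i.e., there exists a tuple t ∈ D and a set Γ ⊆ D such that Q(D ∖ Γ) holds and Q(D ∖ (Γ ∪ {t})) fails. -/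
/-- For a database `D` (all tuples endogenous) and a boolean monotone
query `Q` with `Q D` true and `Q ∅` false, the set of actual causes for the answer of
`Q` in `D` is non-empty: there are `t ∈ D` and `Γ ⊆ D` with `Q (D \ Γ)` and
`¬ Q (D \ (Γ ∪ {t}))`. -/
theorem stmt_9 {α : Type*} [DecidableEq α]
    (D : Finset α)
    (Q : Finset α → Prop)
    (hmono : ∀ ⦃A B : Finset α⦄, A ⊆ B → Q A → Q B)
    (hQD : Q D) (hQempty : ¬ Q ∅) :
    ∃ t ∈ D, ∃ Γ ⊆ D, Q (D \ Γ) ∧ ¬ Q (D \ (Γ ∪ {t})) := by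
  classical
  have hex : ∃ n, ∃ S : Finset α, S ⊆ D ∧ Q S ∧ S.card = n :=
    ⟨D.card, D, subset_rfl, hQD, rfl⟩
  obtain ⟨S, hSD, hQS, hScard⟩ := Nat.find_spec hex
  have hSne : S.Nonempty := by
    rcases S.eq_empty_or_nonempty with h | h
    · exact absurd (h ▸ hQS) hQempty
    · exact h
  obtain ⟨t, htS⟩ := hSne
  refine ⟨t, hSD htS, D \ S, Finset.sdiff_subset, ?_, ?_⟩
  · have : D \ (D \ S) = S := Finset.sdiff_sdiff_eq_self hSD
    rw [this]; exact hQS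
  · intro hQ
    have hsub : D \ (D \ S ∪ {t}) = S \ {t} := by
      rw [Finset.sdiff_union_distrib, Finset.sdiff_sdiff_eq_self hSD]
      ext x
      simp only [Finset.mem_inter, Finset.mem_sdiff, Finset.mem_singleton]
      exact ⟨fun ⟨h1, _, h2⟩ => ⟨h1, h2⟩, fun ⟨h1, h2⟩ => ⟨h1, hSD h1, h2⟩⟩
    rw [hsub] at hQ
    have hcard : (S \ {t}).card < Nat.find hex := by
      rw [← hScard]
      exact Finset.card_lt_card (Finset.sdiff_ssubset (by simpa) (by simp))
    exact Nat.find_min hex hcard ⟨S \ {t}, (Finset.sdiff_subset).trans hSD, hQ, rfl⟩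
end

section
/- Let D be a finite database instance partitioned into disjoint sets D = Dⁿ ∪ Dˣ of endogenous and exogenous tuples, and let Q be a boolean monotone query with Q(D) true. If N ⊆ Dⁿ is a subset-minimal necessary-hypothesis set (Q(D ∖ N) fails, and Q(D ∖ N') holds for every proper subset N' ⊊ N) and t ∈ N, then Γ := N ∖ {t} is a contingency set witnessing that t is an actual cause for the answer of Q: Q(D ∖ Γ) holds and Q(D ∖ (Γ ∪ {t})) fails; consequently the responsibility of t is at least 1/|N|. -/
/-- For a database instance `D = Dn ∪ Dx` (disjoint endogenous/exogenous
tuples) and a boolean monotone query `Q` true in `D`: if `N ⊆ Dn` is a subset-minimal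
necessary-hypothesis set (`Q (D \ N)` fails and `Q (D \ N')` holds for every proper
subset `N' ⊊ N`) and `t ∈ N`, then `Γ := N \ {t}` is a contingency set witnessing that
`t` is an actual cause (`Q (D \ Γ)` holds, `Q (D \ (Γ ∪ {t}))` fails); consequently the
responsibility of `t` is at least `1/|N|`. -/
theorem stmt_14 {α : Type*} [DecidableEq α]
    (Dn Dx : Finset α) (hdisj : Disjoint Dn Dx)
    (Q : Finset α → Prop)
    (hmono : ∀ ⦃A B : Finset α⦄, A ⊆ B → Q A → Q B)
    (D : Finset α) (hD : D = Dn ∪ Dx)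
    (hQD : Q D)
    (N : Finset α) (hNsub : N ⊆ Dn)
    (hNnec : ¬ Q (D \ N))
    (hNmin : ∀ N' ⊂ N, Q (D \ N'))
    (t : α) (ht : t ∈ N) :
    (Q (D \ (N \ {t})) ∧ ¬ Q (D \ ((N \ {t}) ∪ {t}))) ∧
    ∃ Γ ⊆ Dn, (Q (D \ Γ) ∧ ¬ Q (D \ (Γ ∪ {t}))) ∧
      (∀ Γ' ⊆ Dn, (Q (D \ Γ') ∧ ¬ Q (D \ (Γ' ∪ {t}))) → Γ.card ≤ Γ'.card) ∧
      (1 : ℚ) / (Γ.card + 1) ≥ 1 / N.card := by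
  classical
  have hNt : (N \ {t}) ∪ {t} = N := by
    rw [Finset.sdiff_union_self_eq_union, Finset.union_eq_left]
    simpa using ht
  have hss : N \ {t} ⊂ N :=
    Finset.sdiff_ssubset (by simpa using ht) (Finset.singleton_nonempty t)
  have hQ1 : Q (D \ (N \ {t})) := hNmin _ hss
  have hQ2 : ¬ Q (D \ ((N \ {t}) ∪ {t})) := by rw [hNt]; exact hNnec
  refine ⟨⟨hQ1, hQ2⟩, ?_⟩
  set P : Finset α → Prop :=
    fun Γ => Γ ⊆ Dn ∧ Q (D \ Γ) ∧ ¬ Q (D \ (Γ ∪ {t})) with hP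
  have hPbase : P (N \ {t}) :=
    ⟨(Finset.sdiff_subset).trans hNsub, hQ1, hQ2⟩
  have hex : ∃ n : ℕ, ∃ Γ : Finset α, P Γ ∧ Γ.card = n :=
    ⟨(N \ {t}).card, N \ {t}, hPbase, rfl⟩
  obtain ⟨Γ, hΓP, hΓcard⟩ := Nat.find_spec hex
  refine ⟨Γ, hΓP.1, hΓP.2, ?_, ?_⟩
  · intro Γ' hΓ'sub hΓ'
    have := Nat.find_min' hex (m := Γ'.card) ⟨Γ', ⟨hΓ'sub, hΓ'⟩, rfl⟩
    omega
  · have hle : Γ.card + 1 ≤ N.card := by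
      have h1 : Γ.card ≤ (N \ {t}).card :=
        hΓcard ▸ Nat.find_min' hex ⟨N \ {t}, hPbase, rfl⟩
      have h2 : (N \ {t}).card < N.card := Finset.card_lt_card hss
      omega
    have hpos : (0 : ℚ) < (Γ.card : ℚ) + 1 := by positivity
    apply one_div_le_one_div_of_le hpos
    exact_mod_cast hle
end
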